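/- arXiv:0802.2451 — 9 statements merged into one kernel-verified Lean document; each statement's English description precedes it below -/
import Mathlib

section
/- Let w : ℕ → ℝ be a weight sequence satisfying the density condition and let N : ℕ → ℝ be coefficients. If the radius of convergence R = sup { y ≥ 0 : the series ∑_k N k · y^(w k) converges } is strictly positive, then the capacity C = limsup_{k→∞} (ln (N k))/(w k) equals −ln R. -/
/-- A weight sequence: strictly increasing and nonnegative. -/
def IsWeightSeq (w : ℕ → ℝ) : Prop :=
  StrictMono w ∧ ∀ k, 0 ≤ w k

/-- The density condition: the number of indices `k` with `w k < n` is at most `L * n ^ K`. -/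
def DensityCond (w : ℕ → ℝ) : Prop :=
  ∃ L K : ℝ, 0 ≤ L ∧ 0 ≤ K ∧ ∀ n : ℕ,
    {k : ℕ | w k < (n : ℝ)}.Finite ∧
    ((Set.ncard {k : ℕ | w k < (n : ℝ)} : ℝ) ≤ L * (n : ℝ) ^ K)

/-!
If `∑ N k * y ^ w k` converges, its terms eventually drop below `1`, i.e.
`log (N k) / w k ≤ -log y` eventually; hence `C ≤ -log R`. Conversely, if
`log (N k) / w k ≤ c' < c` eventually, then `N k * exp (-c) ^ w k ≤ q ^ w k` with
`q = exp (c' - c) < 1`, and `∑ q ^ w k` converges because the density condition puts at most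
`L (n + 1) ^ K` weights into `[n, n + 1)`; hence `exp (-c) ≤ R` for every `c > C`.
-/

open Filter Real Finset

theorem summable_add_one_rpow_mul_geometric (K : ℝ) {q : ℝ} (hq0 : 0 < q) (hq1 : q < 1) :
    Summable fun n : ℕ => ((n : ℝ) + 1) ^ K * q ^ n := by
  set m := ⌈K⌉₊
  have hnorm : ‖q‖ < 1 := by rwa [norm_of_nonneg hq0.le]
  have hshift : Summable fun n : ℕ => ((n : ℝ) + 1) ^ m * q ^ n := by
    have h := (summable_nat_add_iff (f := fun n : ℕ => (n : ℝ) ^ m * q ^ n) 1).2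
      (summable_pow_mul_geometric_of_norm_lt_one m hnorm)
    refine (h.mul_left q⁻¹).congr fun n => ?_
    simp only [Nat.cast_add_one, pow_succ]
    field_simp
  refine hshift.of_nonneg_of_le (fun n => by positivity) fun n => ?_
  gcongr
  rw [← rpow_natCast]
  exact rpow_le_rpow_of_exponent_le (by linarith [n.cast_nonneg (α := ℝ)]) (Nat.le_ceil K)

namespace DensityCond

variable {w : ℕ → ℝ}

theorem tendsto_atTop (hdens : DensityCond w) : Tendsto w atTop atTop := by
  obtain ⟨L, K, -, -, hd⟩ := hdens
  refine Filter.tendsto_atTop.2 fun b => ?_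
  rw [← Nat.cofinite_eq_atTop]
  filter_upwards [(hd ⌈b⌉₊).1.eventually_cofinite_notMem] with k hk
  exact (Nat.le_ceil b).trans (not_lt.1 hk)

theorem summable_rpow (hdens : DensityCond w) (hw0 : ∀ k, 0 ≤ w k) {q : ℝ} (hq0 : 0 < q)
    (hq1 : q < 1) : Summable fun k => q ^ w k := by
  obtain ⟨L, K, hL, -, hd⟩ := hdens
  have hfiber (u : Finset ℕ) (n : ℕ) :
      (#{k ∈ u | ⌊w k⌋₊ = n} : ℝ) ≤ L * ((n : ℝ) + 1) ^ K := by
    have hsub : (↑{k ∈ u | ⌊w k⌋₊ = n} : Set ℕ) ⊆ {k | w k < ((n + 1 : ℕ) : ℝ)} := by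
      intro k hk
      rw [mem_coe, mem_filter] at hk
      exact_mod_cast hk.2 ▸ Nat.lt_floor_add_one (w k)
    calc (#{k ∈ u | ⌊w k⌋₊ = n} : ℝ) ≤ Set.ncard {k | w k < ((n + 1 : ℕ) : ℝ)} := by
          exact_mod_cast Set.ncard_coe_finset _ ▸ Set.ncard_le_ncard hsub (hd (n + 1)).1
      _ ≤ L * ((n : ℝ) + 1) ^ K := by exact_mod_cast (hd (n + 1)).2
  have hmaj : Summable fun n : ℕ => L * ((n : ℝ) + 1) ^ K * q ^ n :=
    ((summable_add_one_rpow_mul_geometric K hq0 hq1).mul_left L).congr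
      fun n => (mul_assoc _ _ _).symm
  refine summable_of_sum_le (c := ∑' n : ℕ, L * ((n : ℝ) + 1) ^ K * q ^ n)
    (fun k => by positivity) fun u => ?_
  calc ∑ k ∈ u, q ^ w k ≤ ∑ k ∈ u, q ^ ⌊w k⌋₊ := sum_le_sum fun k _ => by
        rw [← rpow_natCast]
        exact rpow_le_rpow_of_exponent_ge hq0 hq1.le (Nat.floor_le (hw0 k))
    _ = ∑ n ∈ u.image (⌊w ·⌋₊), #{k ∈ u | ⌊w k⌋₊ = n} • q ^ n := sum_comp _ _
    _ ≤ ∑ n ∈ u.image (⌊w ·⌋₊), L * ((n : ℝ) + 1) ^ K * q ^ n := sum_le_sum fun n _ => by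
        rw [nsmul_eq_mul]
        gcongr
        exact hfiber u n
    _ ≤ ∑' n : ℕ, L * ((n : ℝ) + 1) ^ K * q ^ n := hmaj.sum_le_tsum _ fun n _ => by positivity

end DensityCond

section Capacity

variable {w N : ℕ → ℝ}

theorem eventually_log_div_le_neg_log_of_summable (hw : Tendsto w atTop atTop)
    (hN : ∀ k, 0 < N k) {y : ℝ} (hy : 0 < y) (hs : Summable fun k => N k * y ^ w k) :
    ∀ᶠ k in atTop, log (N k) / w k ≤ -log y := by
  filter_upwards [hs.tendsto_atTop_zero.eventually_lt_const one_pos, hw.eventually_gt_atTop 0]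
    with k hk hwk
  have hlog := log_nonpos (by have := hN k; positivity) hk.le
  rw [log_mul (hN k).ne' (rpow_pos_of_pos hy _).ne', log_rpow hy] at hlog
  rw [div_le_iff₀ hwk]
  linarith

theorem limsup_log_div_le_neg_log_of_summable (hw0 : ∀ k, 0 ≤ w k)
    (hw : Tendsto w atTop atTop) (hN : ∀ k, 1 ≤ N k) {y : ℝ} (hy : 0 < y)
    (hs : Summable fun k => N k * y ^ w k) :
    atTop.limsup (fun k => log (N k) / w k) ≤ -log y :=
  limsup_le_of_le (isCoboundedUnder_le_of_le atTop fun k => div_nonneg (log_nonneg (hN k)) (hw0 k))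
    (eventually_log_div_le_neg_log_of_summable hw (fun k => one_pos.trans_le (hN k)) hy hs)

theorem summable_mul_exp_neg_rpow_of_eventually_log_div_le (hdens : DensityCond w)
    (hw0 : ∀ k, 0 ≤ w k) (hN : ∀ k, 0 < N k) {c' c : ℝ} (hc : c' < c)
    (h : ∀ᶠ k in atTop, log (N k) / w k ≤ c') :
    Summable fun k => N k * exp (-c) ^ w k := by
  refine (hdens.summable_rpow hw0 (exp_pos (c' - c)) (exp_lt_one_iff.2 (by linarith)))
    |>.of_norm_bounded_eventually_nat ?_
  filter_upwards [h, hdens.tendsto_atTop.eventually_gt_atTop 0] with k hk hwk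
  rw [div_le_iff₀ hwk, log_le_iff_le_exp (hN k)] at hk
  rw [norm_of_nonneg (by have := hN k; positivity), ← exp_mul, ← exp_mul, sub_mul, sub_eq_add_neg,
    exp_add, ← neg_mul]
  gcongr

end Capacity

theorem capacity_eq_neg_log_radius (w N : ℕ → ℝ)
    (hw : IsWeightSeq w) (hdens : DensityCond w)
    (hN : ∀ k, 1 ≤ N k)
    (R : ℝ) (hR : R = sSup {y : ℝ | 0 ≤ y ∧ Summable (fun k => N k * y ^ (w k))})
    (hRpos : 0 < R) :
    Filter.atTop.limsup (fun k => Real.log (N k) / w k) = -Real.log R := by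
  have hw0 := hw.2
  have hwtop := hdens.tendsto_atTop
  have hNpos k : 0 < N k := one_pos.trans_le (hN k)
  set S := {y : ℝ | 0 ≤ y ∧ Summable (fun k => N k * y ^ (w k))}
  -- `sSup` of an empty or unbounded set of reals is `0`
  have hSne : S.Nonempty := Set.nonempty_iff_ne_empty.2 fun h => by simp [hR, h] at hRpos
  have hSbdd : BddAbove S := by
    by_contra h
    rw [hR, Real.sSup_of_not_bddAbove h] at hRpos
    exact hRpos.false
  apply le_antisymm
  · rw [le_neg, log_le_iff_le_exp hRpos, hR]
    refine csSup_le hSne fun y ⟨hy0, hy⟩ => ?_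
    rcases hy0.eq_or_lt with rfl | hypos
    · exact (exp_pos _).le
    · rw [← log_le_iff_le_exp hypos, ← le_neg]
      exact limsup_log_div_le_neg_log_of_summable hw0 hwtop hN hypos hy
  · obtain ⟨y₀, ⟨-, hy₀⟩, hy₀pos⟩ := exists_lt_of_lt_csSup hSne (hR ▸ hRpos)
    have hbdd : IsBoundedUnder (· ≤ ·) atTop fun k => log (N k) / w k :=
      ⟨_, eventually_log_div_le_neg_log_of_summable hwtop hNpos hy₀pos hy₀⟩
    refine le_of_forall_gt_imp_ge_of_dense fun c hc => ?_
    obtain ⟨c', hCc', hc'c⟩ := exists_between hc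
    have hmem : exp (-c) ∈ S := ⟨(exp_pos _).le,
      summable_mul_exp_neg_rpow_of_eventually_log_div_le hdens hw0 hNpos hc'c
        ((eventually_lt_of_limsup_lt hCc' hbdd).mono fun k => le_of_lt)⟩
    rw [neg_le, le_log_iff_exp_le hRpos, hR]
    exact le_csSup hSbdd hmem
end

section
/- Let w : ℕ → ℝ be a weight sequence satisfying the density condition and let N : ℕ → ℝ be coefficients with radius of convergence R = sup { y ≥ 0 : the series ∑_k N k · y^(w k) converges } strictly positive. Then for every ε > 0 one has N k ≥ exp(w k · (−ln R − ε)) for infinitely many k. -/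
lemma summable_exp_neg_weight (w : ℕ → ℝ) (hw : IsWeightSeq w) (hdens : DensityCond w)
    {c : ℝ} (hc : 0 < c) : Summable (fun k => Real.exp (-(c * w k))) := by
  obtain ⟨L, K, hL, hK, hd⟩ := hdens
  have key : ∀ k : ℕ, (k + 1 : ℝ) ≤ L * (w k + 1) ^ K := by
    intro k
    obtain ⟨hfin, hcard⟩ := hd (⌊w k⌋₊ + 1)
    have hwk : w k < ((⌊w k⌋₊ + 1 : ℕ) : ℝ) := by
      push_cast
      exact Nat.lt_floor_add_one (w k)
    have hsub : ((Finset.range (k+1) : Finset ℕ) : Set ℕ) ⊆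
        {j : ℕ | w j < ((⌊w k⌋₊ + 1 : ℕ) : ℝ)} := by
      intro j hj
      simp only [Finset.coe_range, Set.mem_Iio] at hj
      exact Set.mem_setOf.mpr (lt_of_le_of_lt (hw.1.monotone (Nat.lt_succ_iff.mp hj)) hwk)
    have h1 : (k + 1 : ℝ) ≤ (Set.ncard {j : ℕ | w j < ((⌊w k⌋₊ + 1 : ℕ) : ℝ)} : ℝ) := by
      have := Set.ncard_le_ncard hsub hfin
      rw [Set.ncard_coe_finset, Finset.card_range] at this
      exact_mod_cast this
    have h2 : (((⌊w k⌋₊ + 1 : ℕ)) : ℝ) ^ K ≤ (w k + 1) ^ K := by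
      apply Real.rpow_le_rpow (by positivity) _ hK
      push_cast
      have := Nat.floor_le (hw.2 k)
      linarith
    calc (k + 1 : ℝ) ≤ _ := h1
      _ ≤ L * (((⌊w k⌋₊ + 1 : ℕ)) : ℝ) ^ K := hcard
      _ ≤ L * (w k + 1) ^ K := mul_le_mul_of_nonneg_left h2 hL
  set n₀ : ℕ := ⌈2 * K⌉₊ with hn₀
  set A : ℝ := L ^ 2 * ((Nat.factorial n₀ : ℝ) / c ^ n₀) with hA
  have bound : ∀ k : ℕ, Real.exp (-(c * w k)) ≤ (Real.exp c * A) * (1 / ((k : ℝ) + 1) ^ 2) := by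
    intro k
    set u : ℝ := w k + 1 with hu
    have hu1 : (1 : ℝ) ≤ u := by have := hw.2 k; simp only [hu]; linarith
    have hu0 : (0 : ℝ) < u := lt_of_lt_of_le one_pos hu1
    have hsq : ((k : ℝ) + 1) ^ 2 ≤ L ^ 2 * u ^ (2 * K) := by
      have h1 : ((k : ℝ) + 1) ^ 2 ≤ (L * u ^ K) ^ 2 :=
        pow_le_pow_left₀ (by positivity) (key k) 2
      calc ((k : ℝ) + 1) ^ 2 ≤ (L * u ^ K) ^ 2 := h1
        _ = L ^ 2 * (u ^ K * u ^ K) := by ring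
        _ = L ^ 2 * u ^ (2 * K) := by rw [← Real.rpow_add hu0]; ring_nf
    have hup : u ^ (2 * K) ≤ ((Nat.factorial n₀ : ℝ) / c ^ n₀) * Real.exp (c * u) := by
      have h1 : u ^ (2 * K) ≤ u ^ (n₀ : ℝ) :=
        Real.rpow_le_rpow_of_exponent_le hu1 (Nat.le_ceil _)
      have h2 : u ^ (n₀ : ℝ) = u ^ n₀ := Real.rpow_natCast u n₀
      have h3 : (c * u) ^ n₀ / (Nat.factorial n₀ : ℝ) ≤ Real.exp (c * u) :=
        Real.pow_div_factorial_le_exp (c * u) (by positivity) n₀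
      have hfac : (0:ℝ) < (Nat.factorial n₀ : ℝ) := by exact_mod_cast Nat.factorial_pos n₀
      have hcn : (0:ℝ) < c ^ n₀ := by positivity
      rw [mul_pow, div_le_iff₀ hfac] at h3
      calc u ^ (2 * K) ≤ u ^ n₀ := h1.trans_eq h2
        _ ≤ ((Nat.factorial n₀ : ℝ) / c ^ n₀) * Real.exp (c * u) := by
            rw [div_mul_eq_mul_div, le_div_iff₀ hcn]
            nlinarith
    have hcomb : ((k : ℝ) + 1) ^ 2 ≤ A * Real.exp (c * u) := by
      calc ((k : ℝ) + 1) ^ 2 ≤ L ^ 2 * u ^ (2 * K) := hsq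
        _ ≤ L ^ 2 * (((Nat.factorial n₀ : ℝ) / c ^ n₀) * Real.exp (c * u)) :=
            mul_le_mul_of_nonneg_left hup (by positivity)
        _ = A * Real.exp (c * u) := by rw [hA]; ring
    have h5 : Real.exp (-(c * u)) * ((k:ℝ)+1)^2 ≤ A := by
      have := mul_le_mul_of_nonneg_right hcomb (Real.exp_pos (-(c*u))).le
      rw [mul_assoc, ← Real.exp_add, add_neg_cancel, Real.exp_zero, mul_one] at this
      linarith [this]
    have hexp : Real.exp (-(c * w k)) = Real.exp c * Real.exp (-(c * u)) := by
      rw [← Real.exp_add]; congr 1; rw [hu]; ring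
    have hkpos : (0:ℝ) < ((k : ℝ) + 1) ^ 2 := by positivity
    have h6 : Real.exp (-(c * u)) ≤ A / ((k:ℝ)+1)^2 := by
      rw [le_div_iff₀ hkpos]; exact h5
    calc Real.exp (-(c * w k)) = Real.exp c * Real.exp (-(c * u)) := hexp
      _ ≤ Real.exp c * (A / ((k:ℝ)+1)^2) :=
          mul_le_mul_of_nonneg_left h6 (Real.exp_pos c).le
      _ = (Real.exp c * A) * (1 / ((k:ℝ)+1)^2) := by ring
  have hbase : Summable (fun n : ℕ => 1 / ((n : ℝ) + 1) ^ 2) := by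
    have h := (summable_nat_add_iff 1).mpr
      (Real.summable_one_div_nat_pow.mpr (le_refl 2))
    exact h.congr (fun n => by push_cast; ring_nf)
  exact Summable.of_nonneg_of_le (fun k => (Real.exp_pos _).le) bound
    (hbase.mul_left (Real.exp c * A))

theorem coeff_ge_exp_frequently (w N : ℕ → ℝ)
    (hw : IsWeightSeq w) (hdens : DensityCond w)
    (hN : ∀ k, 1 ≤ N k)
    (R : ℝ) (hR : R = sSup {y : ℝ | 0 ≤ y ∧ Summable (fun k => N k * y ^ (w k))})
    (hRpos : 0 < R) :
    ∀ ε > 0, ∃ᶠ k in Filter.atTop, N k ≥ Real.exp (w k * (-Real.log R - ε)) := by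
  intro ε hε
  by_contra hcon
  rw [Filter.not_frequently] at hcon
  obtain ⟨K₀, hK₀⟩ := Filter.eventually_atTop.mp hcon
  set c : ℝ := ε / 2 with hc
  have hcpos : 0 < c := by positivity
  set y : ℝ := R * Real.exp c with hy
  have hy0 : 0 < y := by positivity
  have hlogy : Real.log y = Real.log R + c := by
    rw [hy, Real.log_mul (ne_of_gt hRpos) (Real.exp_ne_zero c), Real.log_exp]
  have hsum : Summable (fun k => N k * y ^ (w k)) := by
    rw [← summable_nat_add_iff K₀]
    refine Summable.of_nonneg_of_le
      (fun n => mul_nonneg (le_trans zero_le_one (hN _)) (Real.rpow_nonneg hy0.le _)) ?_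
      ((summable_nat_add_iff K₀).mpr (summable_exp_neg_weight w hw hdens hcpos))
    intro n
    set k := n + K₀ with hk
    have hle : N k ≤ Real.exp (w k * (-Real.log R - ε)) :=
      le_of_not_ge (hK₀ k (Nat.le_add_left K₀ n))
    have hyw : y ^ (w k) = Real.exp (w k * Real.log y) := by
      rw [Real.rpow_def_of_pos hy0]; ring_nf
    have hywpos : (0:ℝ) < y ^ (w k) := Real.rpow_pos_of_pos hy0 _
    calc N k * y ^ (w k) ≤ Real.exp (w k * (-Real.log R - ε)) * y ^ (w k) :=
          mul_le_mul_of_nonneg_right hle hywpos.le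
      _ = Real.exp (-(c * w k)) := by
          rw [hyw, ← Real.exp_add, hlogy]
          congr 1
          rw [hc]; ring
  set S : Set ℝ := {y : ℝ | 0 ≤ y ∧ Summable (fun k => N k * y ^ (w k))} with hS
  have hyS : y ∈ S := ⟨hy0.le, hsum⟩
  have hbdd : BddAbove S := by
    by_contra hnb
    rw [hR, Real.sSup_of_not_bddAbove hnb] at hRpos
    exact lt_irrefl 0 hRpos
  have hyle : y ≤ R := by rw [hR]; exact le_csSup hbdd hyS
  have h1lt : 1 < Real.exp c := by
    rw [← Real.exp_zero]
    exact Real.exp_lt_exp.mpr hcpos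
  nlinarith [h1lt, hRpos, hyle]
end

section
/- Let w : ℕ → ℝ be a weight sequence, let a : ℕ → ℝ satisfy a k ≥ 0 for all k, and let Q ∈ ℝ be such that the series ∑_k a k · exp(−(w k)·s) converges for every complex s with Re s > Q. Then the function F(s) = ∑_k a k · exp(−(w k)·s) is complex differentiable (analytic) at every point of the open half-plane { s ∈ ℂ : Re s > Q }. -/
/-! On the closed half-plane `x ≤ re z` the terms are dominated by `‖a k‖ * exp (-(w k) * x)`
because the weights are nonnegative, so for any abscissa `x` of absolute convergence the series
converges locally uniformly on `x < re z` and its sum is holomorphic there (Weierstrass). For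
nonnegative coefficients, convergence at a real point is absolute convergence, and every `s`
with `Q < re s` lies to the right of such a point. -/

open Complex

section GeneralizedDirichletSeries

variable {w : ℕ → ℝ} {a : ℕ → ℂ}

lemma norm_mul_exp_neg_ofReal_mul (c : ℂ) (l : ℝ) (z : ℂ) :
    ‖c * exp (-(l : ℂ) * z)‖ = ‖c‖ * Real.exp (-l * z.re) := by
  simp [norm_exp]

lemma norm_mul_exp_neg_ofReal_mul_le {l x : ℝ} (hl : 0 ≤ l) (c : ℂ) {z : ℂ} (hz : x ≤ z.re) :
    ‖c * exp (-(l : ℂ) * z)‖ ≤ ‖c‖ * Real.exp (-l * x) := by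
  rw [norm_mul_exp_neg_ofReal_mul]
  gcongr ‖c‖ * Real.exp ?_
  nlinarith

lemma differentiableOn_tsum_mul_exp_neg_ofReal_mul (hw : ∀ k, 0 ≤ w k) {x : ℝ}
    (hx : Summable fun k => ‖a k‖ * Real.exp (-w k * x)) :
    DifferentiableOn ℂ (fun z => ∑' k, a k * exp (-(w k : ℂ) * z)) {z | x < z.re} :=
  differentiableOn_tsum_of_summable_norm hx (fun _ => by fun_prop)
    (isOpen_lt continuous_const continuous_re)
    fun k _ hz => norm_mul_exp_neg_ofReal_mul_le (hw k) (a k) (le_of_lt hz)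

lemma summable_mul_real_exp_of_summable_ofReal {b : ℕ → ℝ} {x : ℝ}
    (h : Summable fun k => (b k : ℂ) * exp (-(w k : ℂ) * x)) :
    Summable fun k => b k * Real.exp (-w k * x) := by
  refine Complex.summable_ofReal.mp (h.congr fun k => ?_)
  push_cast
  rfl

end GeneralizedDirichletSeries

theorem dirichlet_analytic_on_halfplane (w a : ℕ → ℝ)
    (hw : IsWeightSeq w) (ha : ∀ k, 0 ≤ a k)
    (Q : ℝ)
    (hconv : ∀ s : ℂ, Q < s.re →
      Summable (fun k => (a k : ℂ) * Complex.exp (-(w k : ℂ) * s))) :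
    ∀ s : ℂ, Q < s.re →
      DifferentiableAt ℂ
        (fun z : ℂ => ∑' k, (a k : ℂ) * Complex.exp (-(w k : ℂ) * z)) s := by
  intro s hs
  obtain ⟨x, hQx, hxs⟩ := exists_between hs
  have habs : Summable fun k => ‖(a k : ℂ)‖ * Real.exp (-w k * x) := by
    simpa [abs_of_nonneg (ha _)] using
      summable_mul_real_exp_of_summable_ofReal (hconv x (by simpa using hQx))
  exact (differentiableOn_tsum_mul_exp_neg_ofReal_mul hw.2 habs).differentiableAt
    ((isOpen_lt continuous_const continuous_re).mem_nhds hxs)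
end

section
/- Let w : ℕ → ℝ be a weight sequence, let a : ℕ → ℝ satisfy a k ≥ 0 for all k, and let Q ∈ ℝ be such that the series ∑_k a k · exp(−(w k)·s) converges for every complex s with Re s > Q. Then for every n ∈ ℕ and every complex s₀ with Re s₀ > Q, the n-th iterated derivative of F(s) = ∑_k a k · exp(−(w k)·s) at s₀ equals ∑_k a k · (−(w k))^n · exp(−(w k)·s₀). -/
/-!
On a vertical strip `a < re z < b` inside the half-plane, each term `c k * exp (-w k * z)` is
dominated in norm by the sum of its values on the two boundary lines. The series therefore
converges locally uniformly, and Weierstrass' theorem differentiates it termwise. The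
differentiated series converges on the whole half-plane, so the argument iterates.
-/

open Complex Set Topology

lemma norm_mul_cexp_neg_ofReal_mul (c : ℂ) (t : ℝ) (z : ℂ) :
    ‖c * cexp (-(t : ℂ) * z)‖ = ‖c‖ * Real.exp (-(t * z.re)) := by
  rw [norm_mul, norm_exp]
  simp

lemma Real.exp_neg_mul_le_add {a b x : ℝ} (hax : a ≤ x) (hxb : x ≤ b) (t : ℝ) :
    Real.exp (-(t * x)) ≤ Real.exp (-(t * a)) + Real.exp (-(t * b)) := by
  rcases le_total 0 t with ht | ht
  · have : Real.exp (-(t * x)) ≤ Real.exp (-(t * a)) := Real.exp_le_exp.2 (by nlinarith)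
    linarith [Real.exp_pos (-(t * b))]
  · have : Real.exp (-(t * x)) ≤ Real.exp (-(t * b)) := Real.exp_le_exp.2 (by nlinarith)
    linarith [Real.exp_pos (-(t * a))]

section ExpSeries

variable {ι : Type*} {c : ι → ℂ} {w : ι → ℝ} {Q : ℝ}

theorem hasSum_deriv_tsum_mul_cexp
    (hconv : ∀ s : ℂ, Q < s.re → Summable fun k => c k * cexp (-(w k : ℂ) * s))
    {s : ℂ} (hs : Q < s.re) :
    HasSum (fun k => c k * -(w k : ℂ) * cexp (-(w k : ℂ) * s))
      (deriv (fun z => ∑' k, c k * cexp (-(w k : ℂ) * z)) s) := by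
  obtain ⟨a, b, hQa, has, hsb⟩ : ∃ a b, Q < a ∧ a < s.re ∧ s.re < b :=
    ⟨(Q + s.re) / 2, s.re + 1, by linarith, by linarith, by linarith⟩
  have hsummable (x : ℝ) (hx : Q < x) : Summable fun k => ‖c k‖ * Real.exp (-(w k * x)) :=
    (hconv x (by simpa using hx)).norm.congr fun k => by
      rw [norm_mul_cexp_neg_ofReal_mul, ofReal_re]
  have hderiv (k : ι) (z : ℂ) : HasDerivAt (fun z => c k * cexp (-(w k : ℂ) * z))
      (c k * -(w k : ℂ) * cexp (-(w k : ℂ) * z)) z :=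
    (((hasDerivAt_id' z).const_mul (-(w k : ℂ))).cexp.const_mul (c k)).congr_deriv (by ring)
  have hstrip := Complex.hasSum_deriv_of_summable_norm
    (U := re ⁻¹' Ioo a b) (F := fun k z => c k * cexp (-(w k : ℂ) * z))
    ((hsummable a hQa).add (hsummable b (by linarith)))
    (fun k => (differentiable_fun_id.const_mul _ |>.cexp.const_mul _).differentiableOn)
    (isOpen_Ioo.preimage continuous_re)
    (fun k z hz => by
      rw [norm_mul_cexp_neg_ofReal_mul, ← mul_add]
      gcongr
      exact Real.exp_neg_mul_le_add hz.1.le hz.2.le _)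
    (show s ∈ re ⁻¹' Ioo a b from ⟨has, hsb⟩)
  simpa only [(hderiv _ s).deriv] using hstrip

theorem summable_mul_neg_pow_mul_cexp
    (hconv : ∀ s : ℂ, Q < s.re → Summable fun k => c k * cexp (-(w k : ℂ) * s)) (n : ℕ)
    {s : ℂ} (hs : Q < s.re) :
    Summable fun k => c k * (-(w k : ℂ)) ^ n * cexp (-(w k : ℂ) * s) := by
  induction n generalizing s with
  | zero => simpa using hconv s hs
  | succ n ih =>
    simpa only [pow_succ, mul_assoc] using
      (hasSum_deriv_tsum_mul_cexp (fun z hz => ih hz) hs).summable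

theorem iteratedDeriv_tsum_mul_cexp
    (hconv : ∀ s : ℂ, Q < s.re → Summable fun k => c k * cexp (-(w k : ℂ) * s)) (n : ℕ)
    {s : ℂ} (hs : Q < s.re) :
    iteratedDeriv n (fun z => ∑' k, c k * cexp (-(w k : ℂ) * z)) s
      = ∑' k, c k * (-(w k : ℂ)) ^ n * cexp (-(w k : ℂ) * s) := by
  induction n generalizing s with
  | zero => simp
  | succ n ih =>
    have hnear : iteratedDeriv n (fun z => ∑' k, c k * cexp (-(w k : ℂ) * z))
        =ᶠ[𝓝 s] fun z => ∑' k, c k * (-(w k : ℂ)) ^ n * cexp (-(w k : ℂ) * z) := by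
      filter_upwards [(isOpen_lt continuous_const continuous_re).mem_nhds hs] with z hz
      exact ih hz
    have hderiv := hasSum_deriv_tsum_mul_cexp
      (fun z hz => summable_mul_neg_pow_mul_cexp hconv n hz) hs
    rw [iteratedDeriv_succ, hnear.deriv_eq, ← hderiv.tsum_eq]
    simp only [pow_succ, mul_assoc]

end ExpSeries

theorem dirichlet_iteratedDeriv_general (w a : ℕ → ℝ)
    (Q : ℝ)
    (hconv : ∀ s : ℂ, Q < s.re →
      Summable (fun k => (a k : ℂ) * Complex.exp (-(w k : ℂ) * s))) :
    ∀ (n : ℕ) (s₀ : ℂ), Q < s₀.re →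
      iteratedDeriv n
        (fun z : ℂ => ∑' k, (a k : ℂ) * Complex.exp (-(w k : ℂ) * z)) s₀
      = ∑' k, (a k : ℂ) * (-(w k : ℂ)) ^ n * Complex.exp (-(w k : ℂ) * s₀) :=
  fun n _ hs₀ => iteratedDeriv_tsum_mul_cexp hconv n hs₀

theorem dirichlet_iteratedDeriv (w a : ℕ → ℝ)
    (hw : IsWeightSeq w) (ha : ∀ k, 0 ≤ a k)
    (Q : ℝ)
    (hconv : ∀ s : ℂ, Q < s.re →
      Summable (fun k => (a k : ℂ) * Complex.exp (-(w k : ℂ) * s))) :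
    ∀ (n : ℕ) (s₀ : ℂ), Q < s₀.re →
      iteratedDeriv n
        (fun z : ℂ => ∑' k, (a k : ℂ) * Complex.exp (-(w k : ℂ) * z)) s₀
      = ∑' k, (a k : ℂ) * (-(w k : ℂ)) ^ n * Complex.exp (-(w k : ℂ) * s₀) :=
  dirichlet_iteratedDeriv_general w a Q hconv
end

section
/- (Generalized Pringsheim theorem.) Let w : ℕ → ℝ be a weight sequence, let a : ℕ → ℝ satisfy a k ≥ 0 for all k, and let Q ∈ ℝ be such that the series ∑_k a k · exp(−(w k)·s) converges for every complex s with Re s > Q and diverges for every real s < Q. Then F has a singularity at s = Q: there is no radius r > 0 and no function g : ℂ → ℂ analytic on the open ball of radius r centered at Q such that g s = ∑_k a k · exp(−(w k)·s) for all s in that ball with Re s > Q. -/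
open Metric Set Topology
open scoped Nat NNReal Complex Real

theorem HasFPowerSeriesAt.hasSum_of_differentiableOn_ball {E : Type*} [NormedAddCommGroup E]
    [NormedSpace ℂ E] [CompleteSpace E] {f : ℂ → E} {p : FormalMultilinearSeries ℂ ℂ E}
    {c z : ℂ} {R : ℝ} (hf : HasFPowerSeriesAt f p c) (hd : DifferentiableOn ℂ f (ball c R))
    (hz : z ∈ ball c R) : HasSum (fun n => p n fun _ => z - c) (f z) := by
  obtain ⟨R', hzR', hR'⟩ := exists_between (mem_ball.1 hz)
  lift R' to ℝ≥0 using dist_nonneg.trans hzR'.le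
  have hball := (hd.mono (closedBall_subset_ball hR')).hasFPowerSeriesOnBall
    (by exact_mod_cast dist_nonneg.trans_lt hzR')
  rw [hball.hasFPowerSeriesAt.eq_formalMultilinearSeries hf] at hball
  simpa using hball.hasSum (y := z - c) (by simpa [mem_eball_zero_iff, dist_eq_norm] using hzR')

theorem DifferentiableOn.piecewise_union {𝕜 E F : Type*} [NontriviallyNormedField 𝕜]
    [NormedAddCommGroup E] [NormedSpace 𝕜 E] [NormedAddCommGroup F] [NormedSpace 𝕜 F]
    {f g : E → F} {U V : Set E} [∀ x, Decidable (x ∈ U)] (hU : IsOpen U) (hV : IsOpen V)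
    (hf : DifferentiableOn 𝕜 f U) (hg : DifferentiableOn 𝕜 g V) (hfg : EqOn f g (U ∩ V)) :
    DifferentiableOn 𝕜 (U.piecewise f g) (U ∪ V) := by
  rintro z (hz | hz)
  · refine ((hf.differentiableAt (hU.mem_nhds hz)).congr_of_eventuallyEq ?_).differentiableWithinAt
    filter_upwards [hU.mem_nhds hz] with x hx using U.piecewise_eq_of_mem f g hx
  · refine ((hg.differentiableAt (hV.mem_nhds hz)).congr_of_eventuallyEq ?_).differentiableWithinAt
    filter_upwards [hV.mem_nhds hz] with x hx
    by_cases hxU : x ∈ U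
    · rw [U.piecewise_eq_of_mem f g hxU, hfg ⟨hxU, hx⟩]
    · exact U.piecewise_eq_of_notMem f g hxU

theorem Complex.ball_ofReal_add_subset {Q t r : ℝ} (ht : 0 ≤ t) :
    ball ((Q + t : ℝ) : ℂ) r ⊆ {z | Q < z.re} ∪ ball (Q : ℂ) r := by
  intro z hz
  by_cases hQ : Q < z.re
  · exact Or.inl hQ
  refine Or.inr (mem_ball.2 (lt_of_le_of_lt ?_ (mem_ball.1 hz)))
  rw [Complex.dist_eq_re_im, Complex.dist_eq_re_im]
  gcongr √(?_ + _)
  simp only [Complex.ofReal_re]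
  nlinarith

namespace GeneralizedDirichletSeries

variable (a w : ℕ → ℝ)

noncomputable def sum (s : ℂ) : ℂ := ∑' k, (a k : ℂ) * cexp (-(w k : ℂ) * s)

/-- For `p = (k, n)`: the `n`-th Taylor term at `s` of `z ↦ a k e^{-w k z}`, evaluated at
`s + y`. -/
noncomputable def taylorTerm (s y : ℂ) (p : ℕ × ℕ) : ℂ :=
  a p.1 * cexp (-w p.1 * s) * (-w p.1 * y) ^ p.2 / p.2 !

noncomputable def realTaylorTerm (σ u : ℝ) (p : ℕ × ℕ) : ℝ :=
  a p.1 * rexp (-w p.1 * σ) * (w p.1 * u) ^ p.2 / p.2 !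

noncomputable def taylorCoeff (s : ℂ) (n : ℕ) : ℂ := ∑' k, taylorTerm a w s 1 (k, n)

variable {a w}

theorem hasSum_taylorTerm_fiber (s y : ℂ) (k : ℕ) :
    HasSum (fun n => taylorTerm a w s y (k, n)) (a k * cexp (-w k * (s + y))) := by
  have hexp := NormedSpace.expSeries_div_hasSum_exp (-(w k : ℂ) * y)
  rw [← Complex.exp_eq_exp_ℂ] at hexp
  rw [mul_add, Complex.exp_add, ← mul_assoc]
  simpa only [taylorTerm, mul_div_assoc] using hexp.mul_left _

theorem taylorTerm_ofReal_neg (σ u : ℝ) (p : ℕ × ℕ) :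
    taylorTerm a w σ (-u) p = realTaylorTerm a w σ u p := by
  simp only [taylorTerm, realTaylorTerm]
  push_cast
  ring_nf

theorem hasSum_realTaylorTerm_fiber (σ u : ℝ) (k : ℕ) :
    HasSum (fun n => realTaylorTerm a w σ u (k, n)) (a k * rexp (-w k * (σ - u))) := by
  rw [← Complex.hasSum_ofReal]
  convert hasSum_taylorTerm_fiber (a := a) (w := w) σ (-u) k using 1
  · simp only [taylorTerm_ofReal_neg]
  · push_cast
    ring_nf

theorem taylorCoeff_mul_pow (s y : ℂ) (n : ℕ) :
    taylorCoeff a w s n * y ^ n = ∑' k, taylorTerm a w s y (k, n) := by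
  rw [taylorCoeff, ← tsum_mul_right]
  congr 1 with k
  simp only [taylorTerm]
  ring

theorem summable_realTaylorTerm_fiber {σ δ : ℝ} (hδ : δ ≠ 0)
    (h : Summable (realTaylorTerm a w σ δ)) (u : ℝ) (n : ℕ) :
    Summable fun k => realTaylorTerm a w σ u (k, n) := by
  refine ((h.comp_injective (Prod.mk_left_injective n)).mul_left ((u / δ) ^ n)).congr fun k => ?_
  simp only [Function.comp_apply, realTaylorTerm, mul_pow, div_pow]
  field_simp

section Nonneg

variable (ha : ∀ k, 0 ≤ a k) (hw : ∀ k, 0 ≤ w k)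
include ha hw

theorem realTaylorTerm_nonneg {σ u : ℝ} (hu : 0 ≤ u) (p : ℕ × ℕ) :
    0 ≤ realTaylorTerm a w σ u p := by
  have := ha p.1
  have := hw p.1
  unfold realTaylorTerm
  positivity

theorem realTaylorTerm_mono {σ u v : ℝ} (hu : 0 ≤ u) (huv : u ≤ v) (p : ℕ × ℕ) :
    realTaylorTerm a w σ u p ≤ realTaylorTerm a w σ v p := by
  have := ha p.1
  have := hw p.1
  unfold realTaylorTerm
  gcongr

theorem norm_taylorTerm (s y : ℂ) (p : ℕ × ℕ) :
    ‖taylorTerm a w s y p‖ = realTaylorTerm a w s.re ‖y‖ p := by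
  simp [taylorTerm, realTaylorTerm, Complex.norm_exp, abs_of_nonneg (ha p.1),
    abs_of_nonneg (hw p.1)]

theorem summable_realTaylorTerm_iff {σ u : ℝ} (hu : 0 ≤ u) :
    Summable (realTaylorTerm a w σ u) ↔ Summable fun k => a k * rexp (-w k * (σ - u)) := by
  have hfiber := hasSum_realTaylorTerm_fiber (a := a) (w := w) σ u
  rw [summable_prod_of_nonneg (realTaylorTerm_nonneg ha hw hu)]
  simp only [fun k => (hfiber k).summable, fun k => (hfiber k).tsum_eq, implies_true, true_and]

theorem hasFPowerSeriesOnBall_sum {s : ℂ} {δ : ℝ} (hδ : 0 < δ)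
    (h : Summable fun k => a k * rexp (-w k * (s.re - δ))) :
    HasFPowerSeriesOnBall (sum a w) (FormalMultilinearSeries.ofScalars ℂ (taylorCoeff a w s)) s
      (ENNReal.ofReal δ) := by
  have hR : Summable (realTaylorTerm a w s.re δ) := (summable_realTaylorTerm_iff ha hw hδ.le).2 h
  have hsummable {y : ℂ} (hy : ‖y‖ ≤ δ) : Summable (taylorTerm a w s y) :=
    .of_norm_bounded hR fun p => (norm_taylorTerm ha hw s y p).trans_le
      (realTaylorTerm_mono ha hw (norm_nonneg y) hy p)
  refine ⟨?_, ENNReal.ofReal_pos.2 hδ, fun {y} hy => ?_⟩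
  · rw [ENNReal.ofReal]
    refine FormalMultilinearSeries.le_radius_of_summable _ <|
      .of_nonneg_of_le (fun _ => by positivity) (fun n => ?_) hR.prod_symm.prod
    have hfiber := (hsummable (y := δ) (Complex.norm_of_nonneg hδ.le).le).comp_injective
      (Prod.mk_left_injective n)
    calc ‖FormalMultilinearSeries.ofScalars ℂ (taylorCoeff a w s) n‖ * (δ.toNNReal : ℝ) ^ n
        = ‖∑' k, taylorTerm a w s δ (k, n)‖ := by
          rw [FormalMultilinearSeries.ofScalars_norm, ← taylorCoeff_mul_pow, norm_mul, norm_pow,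
            Complex.norm_of_nonneg hδ.le, Real.coe_toNNReal δ hδ.le]
      _ ≤ ∑' k, ‖taylorTerm a w s δ (k, n)‖ := norm_tsum_le_tsum_norm hfiber.norm
      _ = ∑' k, realTaylorTerm a w s.re δ (k, n) := by
          simp only [norm_taylorTerm ha hw, Complex.norm_of_nonneg hδ.le]
  · have hy : ‖y‖ < δ := by
      simpa [mem_eball_zero_iff, enorm_eq_nnnorm, ENNReal.lt_ofReal_iff_toReal_lt] using hy
    have hT := (hsummable hy.le).hasSum
    have hleft := hT.prod_fiberwise fun k => hasSum_taylorTerm_fiber s y k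
    have hright := (hsummable hy.le).prod_symm.hasSum.prod_fiberwise fun n =>
      ((hsummable hy.le).comp_injective (Prod.mk_left_injective n)).hasSum
    have hswap : ∑' p : ℕ × ℕ, taylorTerm a w s y p.swap = ∑' p, taylorTerm a w s y p :=
      (Equiv.prodComm ℕ ℕ).tsum_eq _
    rw [hswap, ← hleft.tsum_eq] at hright
    have hterm (n : ℕ) :
        FormalMultilinearSeries.ofScalars ℂ (taylorCoeff a w s) n (fun _ => y) =
          ∑' k, taylorTerm a w s y (k, n) := by
      rw [FormalMultilinearSeries.ofScalars_apply_eq, smul_eq_mul, taylorCoeff_mul_pow]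
    simp only [hterm]
    exact hright

theorem summable_of_summable_taylorCoeff_mul_neg_pow {σ u δ : ℝ} (hu : 0 ≤ u) (hδ : 0 < δ)
    (hδsum : Summable fun k => a k * rexp (-w k * (σ - δ)))
    (h : Summable fun n => taylorCoeff a w σ n * (-u : ℂ) ^ n) :
    Summable fun k => a k * rexp (-w k * (σ - u)) := by
  have hfiber := summable_realTaylorTerm_fiber hδ.ne'
    ((summable_realTaylorTerm_iff ha hw hδ.le).2 hδsum) u
  refine (summable_realTaylorTerm_iff ha hw hu).1 ?_
  suffices Summable fun p : ℕ × ℕ => realTaylorTerm a w σ u p.swap from this.prod_symm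
  rw [summable_prod_of_nonneg fun p => realTaylorTerm_nonneg ha hw hu p.swap]
  refine ⟨hfiber, ?_⟩
  rw [← Complex.summable_ofReal]
  refine h.congr fun n => ?_
  rw [taylorCoeff_mul_pow, Complex.ofReal_tsum]
  simp only [Prod.swap_prod_mk, ← taylorTerm_ofReal_neg]

theorem differentiableOn_sum {Q : ℝ}
    (hsum : ∀ σ : ℝ, Q < σ → Summable fun k => a k * rexp (-w k * σ)) :
    DifferentiableOn ℂ (sum a w) {s | Q < s.re} := fun s (hs : Q < s.re) =>
  (hasFPowerSeriesOnBall_sum ha hw (by linarith : 0 < (s.re - Q) / 2)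
    (hsum _ (by linarith))).analyticAt.differentiableAt.differentiableWithinAt

theorem summable_of_differentiableOn_ball {f : ℂ → ℂ} {σ δ R u : ℝ} (hδ : 0 < δ)
    (hδsum : Summable fun k => a k * rexp (-w k * (σ - δ)))
    (hf : DifferentiableOn ℂ f (ball (σ : ℂ) R)) (hfs : sum a w =ᶠ[𝓝 (σ : ℂ)] f)
    (hu : 0 ≤ u) (huR : u < R) :
    Summable fun k => a k * rexp (-w k * (σ - u)) := by
  have hσ : HasFPowerSeriesAt f (FormalMultilinearSeries.ofScalars ℂ (taylorCoeff a w σ)) σ :=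
    (hasFPowerSeriesOnBall_sum ha hw hδ (by simpa using hδsum)).hasFPowerSeriesAt.congr hfs
  have hTaylor := hσ.hasSum_of_differentiableOn_ball hf (z := ((σ - u : ℝ) : ℂ))
    (by simpa [Complex.dist_eq, abs_of_nonneg hu] using huR)
  refine summable_of_summable_taylorCoeff_mul_neg_pow ha hw hu hδ hδsum ?_
  simpa [FormalMultilinearSeries.ofScalars_apply_eq, mul_comm] using hTaylor.summable

end Nonneg

end GeneralizedDirichletSeries

open GeneralizedDirichletSeries in
/-- Generalized Pringsheim theorem: the abscissa of convergence of a generalized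
Dirichlet series with nonnegative coefficients is a singularity of its sum. -/
theorem generalized_pringsheim (w a : ℕ → ℝ)
    (hw : IsWeightSeq w) (ha : ∀ k, 0 ≤ a k)
    (Q : ℝ)
    (hconv : ∀ s : ℂ, Q < s.re →
      Summable (fun k => (a k : ℂ) * Complex.exp (-(w k : ℂ) * s)))
    (hdiv : ∀ s : ℝ, s < Q →
      ¬ Summable (fun k => a k * Real.exp (-(w k) * s))) :
    ¬ ∃ (r : ℝ) (g : ℂ → ℂ), 0 < r ∧
        (∀ z ∈ Metric.ball (Q : ℂ) r, AnalyticAt ℂ g z) ∧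
        (∀ s ∈ Metric.ball (Q : ℂ) r, Q < s.re →
          g s = ∑' k, (a k : ℂ) * Complex.exp (-(w k : ℂ) * s)) := by
  classical
  rintro ⟨r, g, hr, hg, hgF⟩
  have hsum (σ : ℝ) (hσ : Q < σ) : Summable fun k => a k * rexp (-w k * σ) := by
    rw [← Complex.summable_ofReal]
    simpa [Complex.ofReal_exp] using hconv σ (by simpa)
  have hhalf : IsOpen {s : ℂ | Q < s.re} := isOpen_lt continuous_const Complex.continuous_re
  set h := {s : ℂ | Q < s.re}.piecewise (sum a w) g
  have hh : DifferentiableOn ℂ h (ball ((Q + r / 2 : ℝ) : ℂ) r) :=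
    ((differentiableOn_sum ha hw.2 hsum).piecewise_union hhalf isOpen_ball
      (fun z hz => (hg z hz).differentiableWithinAt) fun z hz => (hgF z hz.2 hz.1).symm).mono
      (Complex.ball_ofReal_add_subset (by positivity))
  have hFh : sum a w =ᶠ[𝓝 ((Q + r / 2 : ℝ) : ℂ)] h := by
    filter_upwards [hhalf.mem_nhds (show Q < ((Q + r / 2 : ℝ) : ℂ).re by simpa)] with z hz
    exact (Set.piecewise_eq_of_mem {s : ℂ | Q < s.re} (sum a w) g hz).symm
  refine hdiv (Q + r / 2 - 3 * r / 4) (by linarith) ?_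
  exact summable_of_differentiableOn_ball ha hw.2 (δ := r / 4) (by positivity)
    (hsum _ (by linarith)) hh hFh (by positivity) (by linarith)
end

section
/- (Generalized exponential growth formula.) Let w : ℕ → ℝ be a weight sequence satisfying the density condition and let N : ℕ → ℝ be coefficients. Assume the set S = { σ ∈ ℝ : the series ∑_k N k · exp(−(w k)·σ) converges } is nonempty, and let Q = inf S. Then the capacity C = limsup_{k→∞} (ln (N k))/(w k) equals Q. -/
/-- Comparison test with an eventual bound. -/
lemma summable_of_eventually_le {f g : ℕ → ℝ} (hf : ∀ k, 0 ≤ f k) (hg : Summable g)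
    (h : ∀ᶠ k in Filter.atTop, f k ≤ g k) : Summable f := by
  obtain ⟨M, hM⟩ := Filter.eventually_atTop.1 h
  rw [← summable_nat_add_iff M]
  exact Summable.of_nonneg_of_le (fun k => hf _) (fun k => hM _ (Nat.le_add_left M k))
    ((summable_nat_add_iff M).2 hg)

/-- Summability of a stretched-exponentially decaying sequence. -/
lemma summable_exp_neg_mul_rpow_aux {a b : ℝ} (ha : 0 < a) (hb : 0 < b) :
    Summable fun k : ℕ => Real.exp (-a * (k : ℝ) ^ b) := by
  have h1 : Filter.Tendsto (fun x : ℝ => x ^ (2 / b) * Real.exp (-a * x))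
      Filter.atTop (nhds 0) := tendsto_rpow_mul_exp_neg_mul_atTop_nhds_zero _ a ha
  have h2 : Filter.Tendsto (fun k : ℕ => (k : ℝ) ^ b) Filter.atTop Filter.atTop :=
    (tendsto_rpow_atTop hb).comp tendsto_natCast_atTop_atTop
  have h3 := (h1.comp h2).eventually_lt_const one_pos
  have hg : Summable fun k : ℕ => ((k : ℝ) ^ (2 : ℝ))⁻¹ :=
    Real.summable_nat_rpow_inv.2 one_lt_two
  refine summable_of_eventually_le (fun k => (Real.exp_pos _).le) hg ?_
  filter_upwards [h3, Filter.eventually_ge_atTop 1] with k hk hk1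
  have hk0 : (0 : ℝ) < (k : ℝ) := by exact_mod_cast hk1
  have heq : ((k : ℝ) ^ b) ^ (2 / b) = (k : ℝ) ^ (2 : ℝ) := by
    rw [← Real.rpow_mul hk0.le]
    congr 1
    field_simp
  have hlt : (k : ℝ) ^ (2 : ℝ) * Real.exp (-a * (k : ℝ) ^ b) < 1 := by
    simpa [Function.comp, heq] using hk
  have hp : (0 : ℝ) < (k : ℝ) ^ (2 : ℝ) := Real.rpow_pos_of_pos hk0 _
  rw [le_inv_comm₀ (Real.exp_pos _) hp]
  calc (k : ℝ) ^ (2 : ℝ) = (k : ℝ) ^ (2 : ℝ) * Real.exp (-a * (k : ℝ) ^ b) *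
        (Real.exp (-a * (k : ℝ) ^ b))⁻¹ := by
        rw [mul_assoc, mul_inv_cancel₀ (Real.exp_pos _).ne', mul_one]
    _ ≤ 1 * (Real.exp (-a * (k : ℝ) ^ b))⁻¹ :=
        mul_le_mul_of_nonneg_right hlt.le (inv_nonneg.2 (Real.exp_pos _).le)
    _ = (Real.exp (-a * (k : ℝ) ^ b))⁻¹ := one_mul _

/-- Generalized exponential growth formula: the capacity equals the abscissa of
convergence of the generalized Dirichlet series. -/
theorem capacity_eq_abscissa (w N : ℕ → ℝ)
    (hw : IsWeightSeq w) (hdens : DensityCond w)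
    (hN : ∀ k, 1 ≤ N k)
    (S : Set ℝ) (hS : S = {σ : ℝ | Summable (fun k => N k * Real.exp (-(w k) * σ))})
    (hSne : S.Nonempty)
    (Q : ℝ) (hQ : Q = sInf S) :
    Filter.atTop.limsup (fun k => Real.log (N k) / w k) = Q := by
  obtain ⟨hmono, hwnn⟩ := hw
  set f : ℕ → ℝ := fun k => Real.log (N k) / w k with hf
  have hNpos : ∀ k, (0 : ℝ) < N k := fun k => lt_of_lt_of_le one_pos (hN k)
  have hlogN : ∀ k, 0 ≤ Real.log (N k) := fun k => Real.log_nonneg (hN k)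
  have hfnn : ∀ k, 0 ≤ f k := fun k => div_nonneg (hlogN k) (hwnn k)
  have hwpos' : ∀ k, 1 ≤ k → 0 < w k := by
    intro k hk
    calc (0 : ℝ) ≤ w 0 := hwnn 0
      _ < w k := hmono (by omega)
  -- every σ ∈ S is positive
  have hSpos : ∀ σ ∈ S, 0 < σ := by
    intro σ hσ
    rw [hS] at hσ
    by_contra hle
    push_neg at hle
    have ht := hσ.tendsto_atTop_zero
    obtain ⟨k, hk⟩ := (ht.eventually_lt_const one_pos).exists
    have h1 : (1 : ℝ) ≤ Real.exp (-(w k) * σ) := by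
      rw [← Real.exp_zero]
      exact Real.exp_le_exp.2 (by nlinarith [hwnn k])
    nlinarith [hN k]
  have hSbdd : BddBelow S := ⟨0, fun σ hσ => (hSpos σ hσ).le⟩
  -- eventual bound from membership in S
  have hevle : ∀ σ ∈ S, ∀ᶠ k in Filter.atTop, f k ≤ σ := by
    intro σ hσ
    rw [hS] at hσ
    have ht := hσ.tendsto_atTop_zero
    filter_upwards [ht.eventually_lt_const one_pos, Filter.eventually_ge_atTop 1]
      with k hk hk1
    have hwk := hwpos' k hk1
    have hNe : N k * Real.exp (-(w k) * σ) < 1 := hk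
    have hNlt : N k < Real.exp (w k * σ) := by
      have := (Real.exp_pos (-(w k) * σ))
      calc N k = N k * Real.exp (-(w k) * σ) * Real.exp (w k * σ) := by
            rw [mul_assoc, ← Real.exp_add]; ring_nf; rw [Real.exp_zero, mul_one]
        _ < 1 * Real.exp (w k * σ) := by gcongr
        _ = Real.exp (w k * σ) := one_mul _
    have hlog : Real.log (N k) < w k * σ := by
      rw [← Real.exp_log (hNpos k)] at hNlt
      exact (Real.exp_lt_exp.1 hNlt)
    rw [hf]
    exact (div_le_iff₀ hwk).2 (by linarith [hlog])
  obtain ⟨σ₀, hσ₀⟩ := hSne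
  have hbdd : Filter.IsBoundedUnder (· ≤ ·) Filter.atTop f :=
    ⟨σ₀, by rw [Filter.eventually_map]; exact hevle σ₀ hσ₀⟩
  have hcobdd : Filter.IsCoboundedUnder (· ≤ ·) Filter.atTop f := by
    have hb' : Filter.IsBoundedUnder (· ≥ ·) Filter.atTop f :=
      ⟨0, by rw [Filter.eventually_map]; exact Filter.Eventually.of_forall hfnn⟩
    exact hb'.isCobounded_flip
  set C : ℝ := Filter.atTop.limsup f with hC
  -- direction 1 : C ≤ Q
  have h1 : C ≤ Q := by
    rw [hQ]
    exact le_csInf ⟨σ₀, hσ₀⟩ fun σ hσ => Filter.limsup_le_of_le hcobdd (hevle σ hσ)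
  -- density condition: key counting bound with exponent K' = K + 1
  obtain ⟨L, K, hL0, hK0, hd⟩ := hdens
  set K' : ℝ := K + 1 with hK'
  have hK'pos : (0 : ℝ) < K' := by positivity
  have hkey : ∀ k : ℕ, (k : ℝ) + 1 ≤ L * (w k + 1) ^ K' := by
    intro k
    set n : ℕ := ⌊w k⌋.toNat + 1 with hn
    have hfl : (0 : ℤ) ≤ ⌊w k⌋ := Int.floor_nonneg.2 (hwnn k)
    have hcast : ((⌊w k⌋.toNat : ℕ) : ℝ) = ((⌊w k⌋ : ℤ) : ℝ) := by
      exact_mod_cast congrArg (Int.cast : ℤ → ℝ) (Int.toNat_of_nonneg hfl)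
    have hn1 : w k < (n : ℝ) := by
      have := Int.lt_floor_add_one (w k)
      push_cast [hn]
      rw [hcast]
      linarith
    have hn2 : (n : ℝ) ≤ w k + 1 := by
      have := Int.floor_le (w k)
      push_cast [hn]
      rw [hcast]
      linarith
    have hnge1 : (1 : ℝ) ≤ (n : ℝ) := by
      have : 1 ≤ n := Nat.le_add_left 1 _
      exact_mod_cast this
    obtain ⟨hfin, hcard⟩ := hd n
    have hsub : Finset.range (k + 1) ⊆ hfin.toFinset := by
      intro j hj
      rw [Set.Finite.mem_toFinset]
      have hjk : j ≤ k := by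
        have := Finset.mem_range.1 hj; omega
      exact lt_of_le_of_lt (hmono.monotone hjk) hn1
    have hcard1 : (k + 1 : ℕ) ≤ {j : ℕ | w j < (n : ℝ)}.ncard := by
      rw [Set.ncard_eq_toFinset_card _ hfin]
      simpa using Finset.card_le_card hsub
    have hrle : (n : ℝ) ^ K ≤ (n : ℝ) ^ K' := by
      apply Real.rpow_le_rpow_of_exponent_le hnge1
      rw [hK']; linarith
    have hrle2 : (n : ℝ) ^ K' ≤ (w k + 1) ^ K' :=
      Real.rpow_le_rpow (by linarith) hn2 hK'pos.le
    calc (k : ℝ) + 1 ≤ ({j : ℕ | w j < (n : ℝ)}.ncard : ℝ) := by exact_mod_cast hcard1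
      _ ≤ L * (n : ℝ) ^ K := hcard
      _ ≤ L * (n : ℝ) ^ K' := by gcongr
      _ ≤ L * (w k + 1) ^ K' := mul_le_mul_of_nonneg_left hrle2 hL0
  have hLpos : 0 < L := by
    by_contra h
    push_neg at h
    have h0 := hkey 0
    have : (0 : ℝ) ≤ (w 0 + 1) ^ K' := Real.rpow_nonneg (by linarith [hwnn 0]) _
    nlinarith
  set b : ℝ := 1 / K' with hb
  have hbpos : 0 < b := by positivity
  -- lower bound on w in terms of the index
  have hwlb : ∀ k : ℕ, ((k : ℝ) + 1) ^ b / L ^ b ≤ w k + 1 := by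
    intro k
    have h1' : ((k : ℝ) + 1) / L ≤ (w k + 1) ^ K' := by
      rw [div_le_iff₀ hLpos, mul_comm]
      exact hkey k
    have h2' : (((k : ℝ) + 1) / L) ^ b ≤ ((w k + 1) ^ K') ^ b :=
      Real.rpow_le_rpow (by positivity) h1' hbpos.le
    have h3' : ((w k + 1) ^ K') ^ b = w k + 1 := by
      rw [← Real.rpow_mul (by linarith [hwnn k]), hb, mul_one_div_cancel hK'pos.ne',
        Real.rpow_one]
    have h4' : (((k : ℝ) + 1) / L) ^ b = ((k : ℝ) + 1) ^ b / L ^ b :=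
      Real.div_rpow (by positivity) hLpos.le b
    rw [h4', h3'] at h2'
    exact h2'
  -- summability of exp(-δ w k) for δ > 0
  have hsum_exp : ∀ δ : ℝ, 0 < δ → Summable fun k : ℕ => Real.exp (-δ * w k) := by
    intro δ hδ
    have hLb : (0 : ℝ) < L ^ b := Real.rpow_pos_of_pos hLpos _
    set a : ℝ := δ / L ^ b with ha
    have hapos : 0 < a := by positivity
    have base : Summable fun k : ℕ => Real.exp (-a * (k : ℝ) ^ b) :=
      summable_exp_neg_mul_rpow_aux hapos hbpos
    have shifted : Summable fun k : ℕ => Real.exp (-a * ((k : ℝ) + 1) ^ b) := by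
      have := (summable_nat_add_iff 1).2 base
      refine this.congr fun k => ?_
      push_cast
      norm_num
    have hmaj : Summable fun k : ℕ => Real.exp δ * Real.exp (-a * ((k : ℝ) + 1) ^ b) :=
      shifted.mul_left _
    apply Summable.of_nonneg_of_le (fun k => (Real.exp_pos _).le) _ hmaj
    intro k
    rw [← Real.exp_add]
    apply Real.exp_le_exp.2
    have hlb := hwlb k
    have hmain : a * ((k : ℝ) + 1) ^ b ≤ δ * (w k + 1) := by
      have h' : δ * (((k : ℝ) + 1) ^ b / L ^ b) ≤ δ * (w k + 1) := by gcongr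
      calc a * ((k : ℝ) + 1) ^ b = δ * (((k : ℝ) + 1) ^ b / L ^ b) := by rw [ha]; ring
        _ ≤ δ * (w k + 1) := h'
    linarith
  -- direction 2 : Q ≤ C
  have h2 : Q ≤ C := by
    apply le_of_forall_pos_le_add
    intro ε hε
    have hmem : C + ε ∈ S := by
      rw [hS]
      have hev : ∀ᶠ k in Filter.atTop, f k < C + ε / 2 :=
        Filter.eventually_lt_of_limsup_lt (by linarith) hbdd
      have hcmp : ∀ᶠ k in Filter.atTop,
          N k * Real.exp (-(w k) * (C + ε)) ≤ Real.exp (-(ε / 2) * w k) := by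
        filter_upwards [hev, Filter.eventually_ge_atTop 1] with k hk hk1
        have hwk := hwpos' k hk1
        have hlog : Real.log (N k) ≤ (C + ε / 2) * w k := by
          have := (div_lt_iff₀ hwk).1 hk
          linarith
        have hNle : N k ≤ Real.exp ((C + ε / 2) * w k) := by
          rw [← Real.exp_log (hNpos k)]
          exact Real.exp_le_exp.2 hlog
        calc N k * Real.exp (-(w k) * (C + ε))
            ≤ Real.exp ((C + ε / 2) * w k) * Real.exp (-(w k) * (C + ε)) := by
              gcongr
          _ = Real.exp ((C + ε / 2) * w k + -(w k) * (C + ε)) := (Real.exp_add _ _).symm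
          _ ≤ Real.exp (-(ε / 2) * w k) := by
              apply Real.exp_le_exp.2
              nlinarith [hwnn k]
      exact summable_of_eventually_le
        (fun k => mul_nonneg (hNpos k).le (Real.exp_pos _).le)
        (hsum_exp (ε / 2) (by linarith)) hcmp
    rw [hQ]
    exact csInf_le hSbdd hmem
  linarith
end

section
/- Let π denote the real number pi and let y ∈ (0,1) be a real number with y + y^(1+π) < 1. Then the family (y^(n₀(s) + π·n₁(s)))_s, indexed by all finite binary strings s containing no two consecutive 1s (where n₀(s) and n₁(s) denote the number of 0s and 1s in s respectively), is summable, and its sum equals (1 + y^π)/(1 − y − y^(1+π)). -/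
open Real

/-- Finite binary strings containing no two consecutive 1s. -/
def NoDoubleOne (s : List Bool) : Prop := ¬ [true, true] <:+: s

namespace NDO

def enc : List Bool → Bool → List Bool
  | [], true => [true]
  | [], false => []
  | false :: l, b => false :: enc l b
  | true :: l, b => true :: false :: enc l b

def dec : List Bool → List Bool × Bool
  | [] => ([], false)
  | [true] => ([], true)
  | true :: false :: t => (true :: (dec t).1, (dec t).2)
  | true :: true :: _ => ([], false)
  | false :: t => (false :: (dec t).1, (dec t).2)

theorem dec_enc : ∀ l b, dec (enc l b) = (l, b)
  | [], true => rfl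
  | [], false => rfl
  | false :: l, b => by simp [enc, dec, dec_enc l b]
  | true :: l, b => by simp [enc, dec, dec_enc l b]

theorem ndo_tail {a : Bool} {t : List Bool} (h : NoDoubleOne (a :: t)) : NoDoubleOne t :=
  fun hi => h (hi.trans (List.infix_cons (List.infix_refl t)))

theorem ndo_cons_false {t : List Bool} (h : NoDoubleOne t) : NoDoubleOne (false :: t) := by
  intro hi
  rcases List.infix_cons_iff.mp hi with hp | hi'
  · simp [List.cons_prefix_cons] at hp
  · exact h hi'

theorem ndo_cons_tf {t : List Bool} (h : NoDoubleOne t) : NoDoubleOne (true :: false :: t) := by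
  intro hi
  rcases List.infix_cons_iff.mp hi with hp | hi'
  · simp [List.cons_prefix_cons] at hp
  · exact ndo_cons_false h hi'

theorem ndo_enc : ∀ l b, NoDoubleOne (enc l b)
  | [], false => by intro hi; simp [enc, List.infix_nil] at hi
  | [], true => by
      intro hi
      have := hi.sublist.length_le
      simp [enc] at this
  | false :: l, b => ndo_cons_false (ndo_enc l b)
  | true :: l, b => ndo_cons_tf (ndo_enc l b)

theorem enc_dec : ∀ s, NoDoubleOne s → enc (dec s).1 (dec s).2 = s
  | [], _ => rfl
  | [true], _ => rfl
  | true :: false :: t, h => by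
      simp [dec, enc, enc_dec t (ndo_tail (ndo_tail h))]
  | true :: true :: t, h =>
      absurd (show [true, true] <+: true :: true :: t from ⟨t, rfl⟩).isInfix h
  | false :: t, h => by simp [dec, enc, enc_dec t (ndo_tail h)]

def E : (List Bool × Bool) ≃ {s : List Bool // NoDoubleOne s} where
  toFun p := ⟨enc p.1 p.2, ndo_enc p.1 p.2⟩
  invFun s := dec s.1
  left_inv p := dec_enc p.1 p.2
  right_inv s := Subtype.ext (enc_dec s.1 s.2)

/-- Sum over all lists of booleans of a multiplicative weight, in `ℝ≥0∞`. -/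
theorem tsum_list_bool (u : Bool → ENNReal) :
    ∑' l : List Bool, (l.map u).prod = (1 - (u false + u true))⁻¹ := by
  rw [← Equiv.tsum_eq List.equivSigmaTuple.symm (fun l : List Bool => (l.map u).prod)]
  rw [ENNReal.tsum_sigma']
  have h1 : ∀ n : ℕ, (∑' φ : Fin n → Bool,
      ((List.equivSigmaTuple.symm ⟨n, φ⟩ : List Bool).map u).prod) = (u false + u true) ^ n := by
    intro n
    rw [tsum_fintype]
    have h2 : ∀ φ : Fin n → Bool,
        ((List.equivSigmaTuple.symm ⟨n, φ⟩ : List Bool).map u).prod = ∏ i, u (φ i) := by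
      intro φ
      simp [List.equivSigmaTuple, List.map_ofFn, List.prod_ofFn]
    calc ∑ φ : Fin n → Bool, ((List.equivSigmaTuple.symm ⟨n, φ⟩ : List Bool).map u).prod
        = ∑ φ : Fin n → Bool, ∏ i, u (φ i) := by simp [h2, List.prod_ofFn]
      _ = ∏ _i : Fin n, ∑ b : Bool, u b := by
          rw [Finset.prod_univ_sum]
          rw [Fintype.piFinset_univ]
      _ = (u false + u true) ^ n := by
          simp [Fintype.sum_bool, add_comm (u true) (u false), Finset.prod_const]
  calc ∑' (n : ℕ) (φ : Fin n → Bool),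
        ((List.equivSigmaTuple.symm ⟨n, φ⟩ : List Bool).map u).prod
      = ∑' n : ℕ, (u false + u true) ^ n := by
        exact tsum_congr h1
    _ = (1 - (u false + u true))⁻¹ := ENNReal.tsum_geometric _

end NDO

theorem genfun_no_double_one (y : ℝ) (hy : y ∈ Set.Ioo (0 : ℝ) 1)
    (hsmall : y + y ^ (1 + π) < 1) :
    HasSum
      (fun s : {s : List Bool // NoDoubleOne s} =>
        y ^ ((s.1.count false : ℝ) + π * (s.1.count true : ℝ)))
      ((1 + y ^ π) / (1 - y - y ^ (1 + π))) := by
  obtain ⟨hy0, hy1⟩ := hy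
  set f : List Bool → ℝ := fun s => y ^ ((s.count false : ℝ) + π * (s.count true : ℝ)) with hfdef
  have hyπ : (0 : ℝ) < y ^ π := Real.rpow_pos_of_pos hy0 π
  have hA0 : (0 : ℝ) < y + y ^ (1 + π) := by positivity
  have h1A : (0 : ℝ) < 1 - (y + y ^ (1 + π)) := by linarith
  have hfnn : ∀ s, 0 ≤ f s := fun s => Real.rpow_nonneg hy0.le _
  -- multiplicativity of f
  have hf_nil : f [] = 1 := by simp [hfdef]
  have hf_cons_false : ∀ s, f (false :: s) = y * f s := by
    intro s
    have he : ((List.count false (false :: s) : ℝ) + π * (List.count true (false :: s) : ℝ))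
        = 1 + ((List.count false s : ℝ) + π * (List.count true s : ℝ)) := by
      simp [List.count_cons]
      -- cast
      ring
    simp only [hfdef]
    rw [he, Real.rpow_add hy0, Real.rpow_one]
  have hf_cons_true : ∀ s, f (true :: s) = y ^ π * f s := by
    intro s
    have he : ((List.count false (true :: s) : ℝ) + π * (List.count true (true :: s) : ℝ))
        = π + ((List.count false s : ℝ) + π * (List.count true s : ℝ)) := by
      simp [List.count_cons]
      -- cast
      ring
    simp only [hfdef]
    rw [he, Real.rpow_add hy0]
  -- block weights
  set cc : Bool → ℝ := fun x => if x then y * y ^ π else y with hccdef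
  set g : List Bool → ℝ := fun l => (l.map cc).prod with hgdef
  have hccnn : ∀ x, 0 ≤ cc x := by
    intro x; cases x <;> simp [hccdef] <;> positivity
  have hgnn : ∀ l, 0 ≤ g l := by
    intro l
    induction l with
    | nil => simp [hgdef]
    | cons a t ih => simpa [hgdef] using mul_nonneg (hccnn a) ih
  have hg_cons : ∀ a l, g (a :: l) = cc a * g l := by intro a l; simp [hgdef]
  have hf_enc : ∀ l b, f (NDO.enc l b) = g l * (if b then y ^ π else 1) := by
    intro l
    induction l with
    | nil =>
        intro b
        cases b
        · simp [NDO.enc, hf_nil, hgdef]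
        · have : f [true] = y ^ π := by
            simp [hfdef]
          simp [NDO.enc, this, hgdef]
    | cons a t ih =>
        intro b
        cases a
        · rw [show NDO.enc (false :: t) b = false :: NDO.enc t b from rfl,
            hf_cons_false, ih b, hg_cons]
          simp [hccdef]
          ring
        · rw [show NDO.enc (true :: t) b = true :: false :: NDO.enc t b from rfl,
            hf_cons_true, hf_cons_false, ih b, hg_cons]
          simp [hccdef]
          ring
  -- move to ℝ≥0∞
  set u : Bool → ENNReal := fun x => ENNReal.ofReal (cc x) with hudef
  have hofg : ∀ l, ENNReal.ofReal (g l) = (l.map u).prod := by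
    intro l
    induction l with
    | nil => simp [hgdef]
    | cons a t ih =>
        rw [hg_cons, ENNReal.ofReal_mul (hccnn a)]
        simp [hudef, ih]
  have hcf : cc false = y := by simp [hccdef]
  have hct : cc true = y * y ^ π := by simp [hccdef]
  have hu_sum : u false + u true = ENNReal.ofReal (y + y ^ (1 + π)) := by
    show ENNReal.ofReal (cc false) + ENNReal.ofReal (cc true) = _
    rw [hcf, hct, ← ENNReal.ofReal_add hy0.le (by positivity)]
    congr 1
    rw [Real.rpow_add hy0, Real.rpow_one]
  set F : {s : List Bool // NoDoubleOne s} → ENNReal := fun s => ENNReal.ofReal (f s.1)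
    with hFdef
  have hFsum : ∑' s, F s
      = ENNReal.ofReal ((1 + y ^ π) / (1 - (y + y ^ (1 + π)))) := by
    rw [← Equiv.tsum_eq NDO.E F]
    have hterm : ∀ p : List Bool × Bool,
        F (NDO.E p) = (p.1.map u).prod * ENNReal.ofReal (if p.2 then y ^ π else 1) := by
      intro p
      rw [hFdef]
      show ENNReal.ofReal (f (NDO.enc p.1 p.2)) = _
      rw [hf_enc, ENNReal.ofReal_mul (hgnn p.1), hofg]
    calc ∑' p : List Bool × Bool, F (NDO.E p)
        = ∑' (l : List Bool) (b : Bool),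
            (l.map u).prod * ENNReal.ofReal (if b then y ^ π else 1) := by
          rw [tsum_congr hterm]
          exact ENNReal.tsum_prod'
      _ = (∑' l : List Bool, (l.map u).prod)
            * (∑' b : Bool, ENNReal.ofReal (if b then y ^ π else 1)) := by
          rw [← ENNReal.tsum_mul_right]
          exact tsum_congr fun l => ENNReal.tsum_mul_left
      _ = (1 - ENNReal.ofReal (y + y ^ (1 + π)))⁻¹
            * (1 + ENNReal.ofReal (y ^ π)) := by
          rw [NDO.tsum_list_bool, hu_sum, tsum_fintype]
          simp [add_comm]
      _ = ENNReal.ofReal ((1 + y ^ π) / (1 - (y + y ^ (1 + π)))) := by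
          rw [div_eq_mul_inv, ENNReal.ofReal_mul (by positivity),
            ENNReal.ofReal_inv_of_pos h1A, ENNReal.ofReal_sub 1 hA0.le,
            ENNReal.ofReal_one, ENNReal.ofReal_add (by norm_num : (0:ℝ) ≤ 1) hyπ.le,
            ENNReal.ofReal_one, mul_comm]
  have hne : ∑' s, F s ≠ ⊤ := by rw [hFsum]; exact ENNReal.ofReal_ne_top
  have hsummable : Summable fun s : {s : List Bool // NoDoubleOne s} => f s.1 := by
    have := ENNReal.summable_toReal hne
    refine this.congr fun s => ?_
    simp [hFdef, ENNReal.toReal_ofReal (hfnn s.1)]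
  have htsum : ∑' s : {s : List Bool // NoDoubleOne s}, f s.1
      = (1 + y ^ π) / (1 - y - y ^ (1 + π)) := by
    have h1 : ∑' s : {s : List Bool // NoDoubleOne s}, f s.1
        = ∑' s : {s : List Bool // NoDoubleOne s}, (F s).toReal := by
      refine tsum_congr fun s => ?_
      simp [hFdef, ENNReal.toReal_ofReal (hfnn s.1)]
    rw [h1, ← ENNReal.tsum_toReal_eq (fun s => ENNReal.ofReal_ne_top), hFsum,
      ENNReal.toReal_ofReal (by positivity)]
    ring_nf
  have := hsummable.hasSum
  rw [htsum] at this
  exact this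
end

section
/- Let π denote the real number pi and let y ∈ (0,1) be a real number. The family (y^(n₀(s) + π·n₁(s)))_s, indexed by all finite binary strings s containing no two consecutive 1s (where n₀(s) and n₁(s) denote the number of 0s and 1s in s respectively), is summable if and only if y + y^(1+π) < 1. -/
/-!
A string without `11` factors uniquely as a word in the blocks `0` and `10`, followed by an
optional final `1`. The weight `y ^ (n₀ + π n₁)` is multiplicative, with block weights `y` and
`y ^ (1 + π)`, so the family is summable exactly when the words over these two blocks are. Over a
finite alphabet with nonnegative letter weights, the words of length `n` have total weight
`(∑ w) ^ n`, so they are summable iff `∑ w < 1`.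
-/

open Real

namespace NoDoubleOne

def block (x : Bool) : List Bool := if x then [true, false] else [false]

def ofBlocks (p : List Bool × Bool) : List Bool :=
  p.1.flatMap block ++ if p.2 then [true] else []

-- The last clause is junk: it is never reached on strings without `11`.
def toBlocks : List Bool → List Bool × Bool
  | [] => ([], false)
  | false :: s => (false :: (toBlocks s).1, (toBlocks s).2)
  | [true] => ([], true)
  | true :: false :: s => (true :: (toBlocks s).1, (toBlocks s).2)
  | true :: true :: _ => ([], false)

theorem ofBlocks_cons (x : Bool) (l : List Bool) (b : Bool) :
    ofBlocks (x :: l, b) = block x ++ ofBlocks (l, b) := by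
  simp only [ofBlocks, List.flatMap_cons, List.append_assoc]

theorem of_cons {x : Bool} {s : List Bool} (h : NoDoubleOne (x :: s)) : NoDoubleOne s :=
  fun hs => h (List.infix_cons hs)

theorem noDoubleOne_ofBlocks (p : List Bool × Bool) : NoDoubleOne (ofBlocks p) := by
  obtain ⟨l, b⟩ := p
  induction l with
  | nil => cases b <;> simp [NoDoubleOne, ofBlocks, List.infix_cons_iff]
  | cons x l ih =>
    cases x <;> simpa [NoDoubleOne, ofBlocks_cons, block, List.infix_cons_iff] using ih

theorem toBlocks_ofBlocks (p : List Bool × Bool) : toBlocks (ofBlocks p) = p := by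
  obtain ⟨l, b⟩ := p
  induction l with
  | nil => cases b <;> simp [ofBlocks, toBlocks]
  | cons x l ih => cases x <;> simp [ofBlocks_cons, block, toBlocks, ih]

theorem ofBlocks_toBlocks {s : List Bool} (h : NoDoubleOne s) : ofBlocks (toBlocks s) = s := by
  induction s using toBlocks.induct with
  | case1 => rfl
  | case2 s ih => simp [toBlocks, ofBlocks_cons, block, ih h.of_cons]
  | case3 => rfl
  | case4 s ih => simp [toBlocks, ofBlocks_cons, block, ih h.of_cons.of_cons]
  | case5 s => exact absurd (List.prefix_append _ s).isInfix h

def blocksEquiv : List Bool × Bool ≃ {s // NoDoubleOne s} where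
  toFun p := ⟨ofBlocks p, noDoubleOne_ofBlocks p⟩
  invFun s := toBlocks s.1
  left_inv := toBlocks_ofBlocks
  right_inv s := Subtype.ext (ofBlocks_toBlocks s.2)

theorem prod_map_ofBlocks {M : Type*} [CommMonoid M] (f : Bool → M) (p : List Bool × Bool) :
    ((ofBlocks p).map f).prod =
      (p.1.map fun x => ((block x).map f).prod).prod * if p.2 then f true else 1 := by
  obtain ⟨l, b⟩ := p
  cases b <;> simp [ofBlocks, List.flatMap_def, List.prod_flatten, Function.comp_def]

end NoDoubleOne

theorem rpow_count_eq_prod_map {y : ℝ} (hy : 0 < y) (a : ℝ) (s : List Bool) :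
    y ^ ((s.count false : ℝ) + a * s.count true) =
      (s.map fun b => if b then y ^ a else y).prod := by
  induction s with
  | nil => simp
  | cons x s ih => cases x <;> simp [← ih, rpow_add hy, mul_add] <;> ring

theorem summable_list_prod_iff {α : Type*} [Fintype α] (w : α → ℝ) (hw : 0 ≤ w) :
    Summable (fun l : List α => (l.map w).prod) ↔ ∑ a, w a < 1 := by
  classical
  have tuple_prod : (fun l : List α => (l.map w).prod) ∘ List.equivSigmaTuple.symm =
      fun p : (n : ℕ) × (Fin n → α) => ∏ i, w (p.2 i) := by
    ext ⟨n, x⟩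
    simp [List.equivSigmaTuple, List.map_ofFn, List.prod_ofFn]
  have tuple_sum (n : ℕ) : ∑ x : Fin n → α, ∏ i, w (x i) = (∑ a, w a) ^ n := by
    rw [← Fintype.prod_sum (fun _ : Fin n => w), Fin.prod_const]
  have tuple_prod_nonneg (p : (n : ℕ) × (Fin n → α)) : 0 ≤ ∏ i, w (p.2 i) :=
    Finset.prod_nonneg fun i _ => hw (p.2 i)
  rw [← List.equivSigmaTuple.symm.summable_iff, tuple_prod,
    summable_sigma_of_nonneg tuple_prod_nonneg]
  simp only [tsum_fintype, tuple_sum]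
  rw [summable_geometric_iff_norm_lt_one, norm_of_nonneg (Finset.sum_nonneg fun a _ => hw a)]
  exact and_iff_right fun _ => Summable.of_finite

theorem summable_mul_prod_iff {α β : Type*} [Finite β] {f : α → ℝ} {g : β → ℝ}
    (hf : 0 ≤ f) (hg : 0 ≤ g) {b : β} (hb : g b ≠ 0) :
    Summable (fun p : α × β => f p.1 * g p.2) ↔ Summable f := by
  refine ⟨fun h => ?_, fun h => h.mul_of_nonneg Summable.of_finite hf hg⟩
  exact (summable_mul_right_iff hb).1 (h.comp_injective (Prod.mk_left_injective b))

open NoDoubleOne in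
theorem genfun_no_double_one_summable_iff (y : ℝ) (hy : y ∈ Set.Ioo (0 : ℝ) 1) :
    Summable
      (fun s : {s : List Bool // NoDoubleOne s} =>
        y ^ ((s.1.count false : ℝ) + π * (s.1.count true : ℝ)))
    ↔ y + y ^ (1 + π) < 1 := by
  obtain ⟨hy0, -⟩ := hy
  let w : Bool → ℝ := fun b => if b then y ^ π else y
  let v : Bool → ℝ := fun x => ((block x).map w).prod
  have hw : 0 ≤ w := fun b => by positivity
  have hv : 0 ≤ v := fun x => List.prod_nonneg (List.forall_mem_map.2 fun b _ => hw b)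
  have weight_eq (p : List Bool × Bool) : ((blocksEquiv p).1.map w).prod =
      (p.1.map v).prod * if p.2 then y ^ π else 1 :=
    prod_map_ofBlocks w p
  have block_sum : ∑ x, v x = y + y ^ (1 + π) := by
    simp [v, w, block, rpow_add hy0, add_comm, mul_comm]
  rw [funext fun s : {s // NoDoubleOne s} => rpow_count_eq_prod_map hy0 π s.1,
    ← blocksEquiv.summable_iff, Function.comp_def, funext weight_eq]
  refine (summable_mul_prod_iff (f := fun l : List Bool => (l.map v).prod)
    (g := fun b : Bool => if b then y ^ π else 1)
    (fun l => List.prod_nonneg (List.forall_mem_map.2 fun x _ => hv x))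
    (fun b => by positivity) (b := false) one_ne_zero).trans ?_
  rw [summable_list_prod_iff v hv, block_sum]
end

section
/- For n ∈ ℕ, let a n be the number of binary strings of length n that do not contain the substring '111'. Then for every real y with |y| < 1/2, the series ∑_n a n · y^n converges and its sum equals (1 + y + y²)/(y³ + (1 − 2y)·(1 + y + y²)). -/
/-!
A string of length `n + 3` without `111` is, uniquely, `0`, `10` or `110` followed by such a string
of length `n + 2`, `n + 1` or `n`; hence `a (n + 3) = a (n + 2) + a (n + 1) + a n`, with
`a 0, a 1, a 2 = 1, 2, 4` since shorter strings cannot contain `111`. As `a n ≤ 2 ^ n`, the series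
converges for `|y| < 1 / 2`, and by the recurrence its sum `S` satisfies
`S * (1 - y - y ^ 2 - y ^ 3) = 1 + y + y ^ 2`; the denominator in the statement is
`1 - y - y ^ 2 - y ^ 3` expanded differently, and it is positive for `|y| < 1 / 2`.
-/

theorem ncard_setOf_length_eq (α : Type*) [Fintype α] (n : ℕ) :
    {l : List α | l.length = n}.ncard = Fintype.card α ^ n := by
  rw [← Nat.card_coe_set_eq, ← card_vector n, ← Nat.card_eq_fintype_card]
  rfl

theorem not_infix_of_not_infix_cons {α : Type*} {s l : List α} {b : α}
    (h : ¬ s <:+: b :: l) : ¬ s <:+: l :=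
  fun hs => h (hs.trans (List.suffix_cons b l).isInfix)

theorem HasSum.mul_eq_of_order_three_recurrence {R : Type*} [CommRing R] [TopologicalSpace R]
    [IsTopologicalRing R] [T2Space R] {a : ℕ → R} {p q r y S : R}
    (hrec : ∀ n, a (n + 3) = p * a (n + 2) + q * a (n + 1) + r * a n)
    (hS : HasSum (fun n => a n * y ^ n) S) :
    S * (1 - p * y - q * y ^ 2 - r * y ^ 3) =
      a 0 + (a 1 - p * a 0) * y + (a 2 - p * a 1 - q * a 0) * y ^ 2 := by
  have h1 := (hasSum_nat_add_iff' 1).mpr hS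
  have h2 := (hasSum_nat_add_iff' 2).mpr hS
  have h3 := (hasSum_nat_add_iff' 3).mpr hS
  have hshift := ((h2.mul_left (p * y)).add (h1.mul_left (q * y ^ 2))).add (hS.mul_left (r * y ^ 3))
  have hterm : (fun n => a (n + 3) * y ^ (n + 3)) = fun n =>
      p * y * (a (n + 2) * y ^ (n + 2)) + q * y ^ 2 * (a (n + 1) * y ^ (n + 1)) +
        r * y ^ 3 * (a n * y ^ n) := by
    funext n
    rw [hrec]
    ring
  have hsum_eq := h3.unique (hterm ▸ hshift)
  simp only [Finset.sum_range_succ, Finset.sum_range_zero] at hsum_eq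
  linear_combination hsum_eq

def tripleOneFree (n : ℕ) : Set (List Bool) :=
  {l | l.length = n ∧ ¬ [true, true, true] <:+: l}

theorem tripleOneFree_subset (n : ℕ) : tripleOneFree n ⊆ {l | l.length = n} :=
  fun _ hl => hl.1

theorem tripleOneFree_finite (n : ℕ) : (tripleOneFree n).Finite :=
  (List.finite_length_eq Bool n).subset (tripleOneFree_subset n)

theorem tripleOneFree_of_lt_three {n : ℕ} (hn : n < 3) :
    tripleOneFree n = {l | l.length = n} := by
  refine (tripleOneFree_subset n).antisymm fun l hl =>
    ⟨hl, fun h => (h.length_le.trans_eq hl).not_gt hn⟩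

theorem ncard_tripleOneFree_le (n : ℕ) : (tripleOneFree n).ncard ≤ 2 ^ n :=
  (Set.ncard_le_ncard (tripleOneFree_subset n) (List.finite_length_eq Bool n)).trans
    (ncard_setOf_length_eq Bool n).le

theorem ncard_tripleOneFree_of_lt_three {n : ℕ} (hn : n < 3) :
    (tripleOneFree n).ncard = 2 ^ n := by
  rw [tripleOneFree_of_lt_three hn, ncard_setOf_length_eq, Fintype.card_bool]

theorem not_tripleOne_infix_false_cons {l : List Bool} (h : ¬ [true, true, true] <:+: l) :
    ¬ [true, true, true] <:+: false :: l := by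
  simp [List.infix_cons_iff, h]

theorem not_tripleOne_infix_true_false_cons {l : List Bool} (h : ¬ [true, true, true] <:+: l) :
    ¬ [true, true, true] <:+: true :: false :: l := by
  simp [List.infix_cons_iff (l₂ := false :: l), not_tripleOne_infix_false_cons h]

theorem not_tripleOne_infix_true_true_false_cons {l : List Bool}
    (h : ¬ [true, true, true] <:+: l) :
    ¬ [true, true, true] <:+: true :: true :: false :: l := by
  simp [List.infix_cons_iff (l₂ := true :: false :: l), not_tripleOne_infix_true_false_cons h]

theorem tripleOneFree_add_three (n : ℕ) :
    tripleOneFree (n + 3) =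
      ([false] ++ ·) '' tripleOneFree (n + 2) ∪ ([true, false] ++ ·) '' tripleOneFree (n + 1) ∪
        ([true, true, false] ++ ·) '' tripleOneFree n := by
  ext l
  constructor
  · rintro ⟨hlen, hl⟩
    match l, hlen with
    | false :: t, hlen =>
      exact .inl (.inl ⟨t, ⟨by simpa using hlen, not_infix_of_not_infix_cons hl⟩, rfl⟩)
    | true :: false :: t, hlen =>
      exact .inl (.inr ⟨t, ⟨by simpa using hlen,
        not_infix_of_not_infix_cons (not_infix_of_not_infix_cons hl)⟩, rfl⟩)
    | true :: true :: false :: t, hlen =>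
      exact .inr ⟨t, ⟨by simpa using hlen, not_infix_of_not_infix_cons
        (not_infix_of_not_infix_cons (not_infix_of_not_infix_cons hl))⟩, rfl⟩
    | true :: true :: true :: t, _ => exact absurd (List.prefix_append _ t).isInfix hl
  · rintro ((⟨t, ⟨hlen, ht⟩, rfl⟩ | ⟨t, ⟨hlen, ht⟩, rfl⟩) | ⟨t, ⟨hlen, ht⟩, rfl⟩)
    · exact ⟨by simp [hlen], not_tripleOne_infix_false_cons ht⟩
    · exact ⟨by simp [hlen], not_tripleOne_infix_true_false_cons ht⟩
    · exact ⟨by simp [hlen], not_tripleOne_infix_true_true_false_cons ht⟩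

theorem ncard_tripleOneFree_add_three (n : ℕ) :
    (tripleOneFree (n + 3)).ncard =
      (tripleOneFree (n + 2)).ncard + (tripleOneFree (n + 1)).ncard + (tripleOneFree n).ncard := by
  have hfin := tripleOneFree_finite
  rw [tripleOneFree_add_three,
    Set.ncard_union_eq ?_ (((hfin _).image _).union ((hfin _).image _)) ((hfin _).image _),
    Set.ncard_union_eq ?_ ((hfin _).image _) ((hfin _).image _),
    Set.ncard_image_of_injective _ (List.append_right_injective _),
    Set.ncard_image_of_injective _ (List.append_right_injective _),
    Set.ncard_image_of_injective _ (List.append_right_injective _)]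
  · rw [Set.disjoint_left]
    rintro _ ⟨_, _, rfl⟩
    simp
  · rw [Set.disjoint_left]
    rintro _ (⟨_, _, rfl⟩ | ⟨_, _, rfl⟩) <;> simp

theorem genfun_no_triple_one (a : ℕ → ℕ)
    (ha : ∀ n : ℕ, a n =
      Set.ncard {l : List Bool | l.length = n ∧ ¬ [true, true, true] <:+: l})
    (y : ℝ) (hy : |y| < 1 / 2) :
    HasSum (fun n : ℕ => (a n : ℝ) * y ^ n)
      ((1 + y + y ^ 2) / (y ^ 3 + (1 - 2 * y) * (1 + y + y ^ 2))) := by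
  have hcount : ∀ n, a n = (tripleOneFree n).ncard := ha
  have hrec (n : ℕ) : (a (n + 3) : ℝ) = 1 * a (n + 2) + 1 * a (n + 1) + 1 * a n := by
    simp only [hcount, ncard_tripleOneFree_add_three]
    push_cast
    ring
  have hsum : Summable fun n => (a n : ℝ) * y ^ n := by
    refine .of_norm_bounded (g := fun n => (2 * |y|) ^ n)
      (summable_geometric_of_lt_one (by positivity) (by linarith)) fun n => ?_
    rw [norm_mul, norm_pow, Real.norm_natCast, Real.norm_eq_abs, mul_pow]
    gcongr
    exact_mod_cast (hcount n).trans_le (ncard_tripleOneFree_le n)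
  have hgen := hsum.hasSum.mul_eq_of_order_three_recurrence hrec
  rw [hcount 0, hcount 1, hcount 2, ncard_tripleOneFree_of_lt_three (by norm_num),
    ncard_tripleOneFree_of_lt_three (by norm_num),
    ncard_tripleOneFree_of_lt_three (by norm_num)] at hgen
  have hden : y ^ 3 + (1 - 2 * y) * (1 + y + y ^ 2) ≠ 0 := by
    obtain ⟨hlo, hhi⟩ := abs_lt.mp hy
    nlinarith [sq_nonneg y, mul_pos (by linarith : 0 < 1 / 2 - y) (by linarith : 0 < 1 / 2 + y)]
  convert hsum.hasSum using 1
  rw [eq_comm, eq_div_iff hden]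
  linear_combination hgen
end
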